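/- If S : [0,T] → ℂ is a continuous function of bounded variation, V : [0,T] → ℂ is continuous, S(0) ≠ 0, and S(t) = S(0) + ∫₀ᵗ S(r) dV(r) for all t ∈ [0,T], then V is of bounded variation and S(t) = S(0)·exp(V(t) − V(0)) for all t ∈ [0,T]. -/

import Mathlib

open Set Filter

/-- A tagged partition of the interval `[a, b]`. -/
structure TaggedPartition (a b : ℝ) where
  n : ℕ
  pts : ℕ → ℝ
  tag : ℕ → ℝ
  mono : ∀ i, i < n → pts i ≤ pts (i + 1)
  first : pts 0 = a
  last : pts n = b
  tag_mem : ∀ i, i < n → tag i ∈ Set.Icc (pts i) (pts (i + 1))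

/-- The Riemann–Stieltjes sum of `M` against `N` along a tagged partition. -/
noncomputable def riemannSum (M N : ℝ → ℂ) {a b : ℝ} (P : TaggedPartition a b) : ℂ :=
  ∑ i ∈ Finset.range P.n, M (P.tag i) * (N (P.pts (i + 1)) - N (P.pts i))

/-- `I` is the Riemann–Stieltjes integral `∫ₐᵇ M dN`: Riemann–Stieltjes sums converge
to `I` as the mesh of the tagged partition tends to `0`. -/
def IsRSIntegral (M N : ℝ → ℂ) (a b : ℝ) (I : ℂ) : Prop :=
  ∀ ε > 0, ∃ δ > 0, ∀ P : TaggedPartition a b,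
    (∀ i, i < P.n → P.pts (i + 1) - P.pts i ≤ δ) → ‖riemannSum M N P - I‖ < ε

/-!
Summation by parts along right-tagged partitions turns the integral equation into the local
estimate `‖S y (V y - V x) - (S y - S x)‖ ≤ (osc V on [x, y]) · (variation of S on [x, y])`.
For every `η ∈ (0, 1)`, uniform continuity of `V` and the expansion `exp d = 1 + d + O(d²)` then
bound the increments of `S · exp (-V)` over short intervals by `η` times the variation of `S`;
chaining these along `[0, t]` shows that `S · exp (-V)` is constant, which is the exponential
formula. In particular `S` never vanishes, so `‖S‖ ≥ m > 0`, and the same local estimate gives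
`‖V y - V x‖ ≤ (2 sup ‖V‖ + 1) / m · (variation of S on [x, y])`: `V` has bounded variation.
-/

open Topology

namespace TaggedPartition

variable {a b c δ : ℝ}

def IsFine (P : TaggedPartition a b) (δ : ℝ) : Prop :=
  ∀ i, i < P.n → P.pts (i + 1) - P.pts i ≤ δ

theorem IsFine.mono {P : TaggedPartition a b} {δ' : ℝ} (hP : P.IsFine δ) (hδ : δ ≤ δ') :
    P.IsFine δ' :=
  fun i hi => (hP i hi).trans hδ

theorem monotoneOn_pts (P : TaggedPartition a b) : MonotoneOn P.pts (Iic P.n) :=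
  monotoneOn_of_le_succ ordConnected_Iic fun i _ _ hi => P.mono i (Nat.succ_le_iff.mp hi)

theorem pts_mem (P : TaggedPartition a b) {i : ℕ} (hi : i ≤ P.n) : P.pts i ∈ Icc a b := by
  constructor
  · simpa only [P.first] using P.monotoneOn_pts (Nat.zero_le P.n) hi (Nat.zero_le i)
  · simpa only [P.last] using P.monotoneOn_pts hi (mem_Iic.mpr le_rfl) hi

theorem left_le_right (P : TaggedPartition a b) : a ≤ b :=
  (P.pts_mem le_rfl).1.trans (P.pts_mem le_rfl).2

theorem sum_norm_sub_le {E : Type*} [SeminormedAddCommGroup E] (P : TaggedPartition a b)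
    {f : ℝ → E} (hf : BoundedVariationOn f (Icc a b)) :
    ∑ i ∈ Finset.range P.n, ‖f (P.pts (i + 1)) - f (P.pts i)‖
      ≤ (eVariationOn f (Icc a b)).toReal := by
  have h := eVariationOn.sum_le_of_monotoneOn_Iic (f := f) P.monotoneOn_pts fun i => P.pts_mem
  rw [← ENNReal.toReal_le_toReal (by simp) hf,
    ENNReal.toReal_sum fun _ _ => edist_ne_top _ _] at h
  simpa only [edist_dist, dist_eq_norm, ENNReal.toReal_ofReal (norm_nonneg _)] using h

noncomputable def uniform (hab : a ≤ b) (n : ℕ) (hn : n ≠ 0) : TaggedPartition a b where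
  n := n
  pts i := a + i * ((b - a) / n)
  tag i := a + (i + 1 : ℕ) * ((b - a) / n)
  mono i _ := by have := div_nonneg (sub_nonneg.mpr hab) n.cast_nonneg; gcongr; simp
  first := by simp
  last := by field_simp; ring
  tag_mem i _ :=
    ⟨by have := div_nonneg (sub_nonneg.mpr hab) n.cast_nonneg; gcongr; simp, le_rfl⟩

theorem exists_isFine (hab : a ≤ b) (hδ : 0 < δ) :
    ∃ P : TaggedPartition a b, P.IsFine δ ∧ ∀ i, P.tag i = P.pts (i + 1) := by
  refine ⟨uniform hab (⌈(b - a) / δ⌉₊ + 1) (Nat.succ_ne_zero _), fun i _ => ?_, fun i => rfl⟩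
  have hn : (b - a) / δ < (⌈(b - a) / δ⌉₊ + 1 : ℕ) := by
    push_cast; exact (Nat.le_ceil _).trans_lt (lt_add_one _)
  simp only [uniform]
  rw [div_lt_iff₀ hδ] at hn
  rw [add_sub_add_left_eq_sub, ← sub_mul, Nat.cast_succ, add_sub_cancel_left, one_mul,
    div_le_iff₀ (by positivity)]
  linarith

section Append

variable (P : TaggedPartition a b) (Q : TaggedPartition b c)

noncomputable def appendPts (i : ℕ) : ℝ := if i ≤ P.n then P.pts i else Q.pts (i - P.n)

noncomputable def appendTag (i : ℕ) : ℝ := if i < P.n then P.tag i else Q.tag (i - P.n)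

variable {P Q} {i : ℕ}

theorem appendPts_of_le (hi : i ≤ P.n) : appendPts P Q i = P.pts i := if_pos hi

theorem appendPts_of_ge (hi : P.n ≤ i) : appendPts P Q i = Q.pts (i - P.n) := by
  rcases hi.eq_or_lt with rfl | hi
  · simp [appendPts, P.last, Q.first]
  · exact if_neg hi.not_ge

theorem appendTag_of_lt (hi : i < P.n) : appendTag P Q i = P.tag i := if_pos hi

theorem appendTag_of_ge (hi : P.n ≤ i) : appendTag P Q i = Q.tag (i - P.n) := if_neg hi.not_gt

theorem appendTag_mem (hi : i < P.n + Q.n) :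
    appendTag P Q i ∈ Icc (appendPts P Q i) (appendPts P Q (i + 1)) := by
  by_cases hiP : i < P.n
  · rw [appendTag_of_lt hiP, appendPts_of_le hiP.le, appendPts_of_le hiP]
    exact P.tag_mem i hiP
  · rw [not_lt] at hiP
    rw [appendTag_of_ge hiP, appendPts_of_ge hiP, appendPts_of_ge (by omega),
      Nat.sub_add_comm hiP]
    exact Q.tag_mem _ (by omega)

end Append

@[simps]
noncomputable def append (P : TaggedPartition a b) (Q : TaggedPartition b c) :
    TaggedPartition a c where
  n := P.n + Q.n
  pts := appendPts P Q
  tag := appendTag P Q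
  mono _ hi := (appendTag_mem hi).1.trans (appendTag_mem hi).2
  first := (appendPts_of_le (Nat.zero_le _)).trans P.first
  last := (appendPts_of_ge (Nat.le_add_right _ _)).trans (by simp [Q.last])
  tag_mem _ := appendTag_mem

theorem IsFine.append {P : TaggedPartition a b} {Q : TaggedPartition b c} (hP : P.IsFine δ)
    (hQ : Q.IsFine δ) : (P.append Q).IsFine δ := by
  intro i hi
  simp only [append_n, append_pts] at hi ⊢
  by_cases hiP : i < P.n
  · rw [appendPts_of_le hiP, appendPts_of_le hiP.le]
    exact hP i hiP
  · rw [not_lt] at hiP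
    rw [appendPts_of_ge (by omega), appendPts_of_ge hiP, Nat.sub_add_comm hiP]
    exact hQ _ (by omega)

theorem riemannSum_append (M N : ℝ → ℂ) (P : TaggedPartition a b) (Q : TaggedPartition b c) :
    riemannSum M N (P.append Q) = riemannSum M N P + riemannSum M N Q := by
  simp only [riemannSum, append_n, append_pts, append_tag]
  rw [Finset.sum_range_add]
  congr 1
  · refine Finset.sum_congr rfl fun i hi => ?_
    have hi := Finset.mem_range.mp hi
    rw [appendTag_of_lt hi, appendPts_of_le hi, appendPts_of_le hi.le]
  · refine Finset.sum_congr rfl fun i _ => ?_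
    rw [appendTag_of_ge (Nat.le_add_right _ _), appendPts_of_ge (by omega),
      appendPts_of_ge (Nat.le_add_right _ _)]
    simp [add_assoc]

end TaggedPartition

theorem IsRSIntegral.sub {M N : ℝ → ℂ} {a b c : ℝ} {I J : ℂ} (hI : IsRSIntegral M N a b I)
    (hJ : IsRSIntegral M N a c J) (hab : a ≤ b) : IsRSIntegral M N b c (J - I) := by
  intro ε hε
  obtain ⟨δ₁, hδ₁, h₁⟩ := hI (ε / 2) (half_pos hε)
  obtain ⟨δ₂, hδ₂, h₂⟩ := hJ (ε / 2) (half_pos hε)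
  obtain ⟨P, hP, -⟩ := TaggedPartition.exists_isFine hab (lt_min hδ₁ hδ₂)
  refine ⟨min δ₁ δ₂, lt_min hδ₁ hδ₂, fun Q hQ => ?_⟩
  have hPQ := h₂ (P.append Q) ((hP.append hQ).mono (min_le_right _ _))
  have hP' := h₁ P (hP.mono (min_le_left _ _))
  rw [TaggedPartition.riemannSum_append] at hPQ
  calc ‖riemannSum M N Q - (J - I)‖
      = ‖(riemannSum M N P + riemannSum M N Q - J) - (riemannSum M N P - I)‖ := by ring_nf
    _ ≤ ‖riemannSum M N P + riemannSum M N Q - J‖ + ‖riemannSum M N P - I‖ := norm_sub_le _ _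
    _ < ε / 2 + ε / 2 := add_lt_add hPQ hP'
    _ = ε := add_halves ε

theorem sum_range_mul_sub_by_parts {R : Type*} [CommRing R] (s v : ℕ → R) (n : ℕ) :
    s n * (v n - v 0) - ∑ i ∈ Finset.range n, s (i + 1) * (v (i + 1) - v i)
      = ∑ i ∈ Finset.range n, (v i - v 0) * (s (i + 1) - s i) := by
  induction n with
  | zero => simp
  | succ n ih =>
    rw [Finset.sum_range_succ, Finset.sum_range_succ, ← ih]
    ring

theorem TaggedPartition.norm_mul_sub_riemannSum_le {a b C : ℝ} {S V : ℝ → ℂ}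
    (P : TaggedPartition a b) (hP : ∀ i, P.tag i = P.pts (i + 1))
    (hS : BoundedVariationOn S (Icc a b)) (hV : ∀ u ∈ Icc a b, ‖V u - V a‖ ≤ C) :
    ‖S b * (V b - V a) - riemannSum S V P‖ ≤ C * (eVariationOn S (Icc a b)).toReal := by
  have hC : 0 ≤ C := (norm_nonneg _).trans (hV a ⟨le_rfl, P.left_le_right⟩)
  have hparts := sum_range_mul_sub_by_parts (S ∘ P.pts) (V ∘ P.pts) P.n
  simp only [Function.comp_apply, P.first, P.last] at hparts
  calc ‖S b * (V b - V a) - riemannSum S V P‖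
      = ‖∑ i ∈ Finset.range P.n, (V (P.pts i) - V a) * (S (P.pts (i + 1)) - S (P.pts i))‖ := by
        rw [← hparts, riemannSum]; simp only [hP]
    _ ≤ ∑ i ∈ Finset.range P.n, C * ‖S (P.pts (i + 1)) - S (P.pts i)‖ := by
        refine (norm_sum_le _ _).trans (Finset.sum_le_sum fun i hi => ?_)
        rw [norm_mul]
        exact mul_le_mul_of_nonneg_right (hV _ (P.pts_mem (Finset.mem_range.mp hi).le))
          (norm_nonneg _)
    _ ≤ C * (eVariationOn S (Icc a b)).toReal := by
        rw [← Finset.mul_sum]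
        exact mul_le_mul_of_nonneg_left (P.sum_norm_sub_le hS) hC

theorem IsRSIntegral.norm_mul_sub_le {a b C : ℝ} {S V : ℝ → ℂ} {I : ℂ}
    (h : IsRSIntegral S V a b I) (hab : a ≤ b) (hS : BoundedVariationOn S (Icc a b))
    (hV : ∀ u ∈ Icc a b, ‖V u - V a‖ ≤ C) :
    ‖S b * (V b - V a) - I‖ ≤ C * (eVariationOn S (Icc a b)).toReal := by
  refine le_of_forall_pos_le_add fun ε hε => ?_
  obtain ⟨δ, hδ, hP⟩ := h ε hε
  obtain ⟨P, hfine, htag⟩ := TaggedPartition.exists_isFine hab hδ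
  calc ‖S b * (V b - V a) - I‖
      ≤ ‖S b * (V b - V a) - riemannSum S V P‖ + ‖riemannSum S V P - I‖ :=
        norm_sub_le_norm_sub_add_norm_sub _ _ _
    _ ≤ C * (eVariationOn S (Icc a b)).toReal + ε :=
        add_le_add (P.norm_mul_sub_riemannSum_le htag hS hV) (hP P hfine).le

section IncrementBounds

variable {E : Type*} [NormedAddCommGroup E] {g : ℝ → E} {φ : ℝ → ℝ} {a b : ℝ}

theorem norm_sub_le_of_forall_near {δ : ℝ} (hδ : 0 < δ) (hab : a ≤ b)
    (h : ∀ x y, a ≤ x → x ≤ y → y ≤ b → y - x ≤ δ → ‖g y - g x‖ ≤ φ y - φ x) :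
    ‖g b - g a‖ ≤ φ b - φ a := by
  have hstep : ∀ k : ℕ, ∀ y, a ≤ y → y ≤ b → y ≤ a + k * δ → ‖g y - g a‖ ≤ φ y - φ a := by
    intro k
    induction k with
    | zero =>
      intro y hay _ hy
      obtain rfl : y = a := le_antisymm (by simpa using hy) hay
      simp
    | succ k ih =>
      intro y hay hyb hy
      by_cases hyk : y ≤ a + k * δ
      · exact ih y hay hyb hyk
      have hax : a ≤ a + k * δ := le_add_of_nonneg_right (by positivity)
      push_cast at hy
      calc ‖g y - g a‖ ≤ ‖g y - g (a + k * δ)‖ + ‖g (a + k * δ) - g a‖ :=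
            norm_sub_le_norm_sub_add_norm_sub _ _ _
        _ ≤ (φ y - φ (a + k * δ)) + (φ (a + k * δ) - φ a) :=
            add_le_add (h _ y hax (not_le.mp hyk).le hyb (by linarith))
              (ih _ hax ((not_le.mp hyk).le.trans hyb) le_rfl)
        _ = φ y - φ a := by ring
  obtain ⟨k, hk⟩ := exists_nat_ge ((b - a) / δ)
  exact hstep k b hab le_rfl (by rw [div_le_iff₀ hδ] at hk; linarith)

theorem eq_of_eventually_norm_sub_le (hab : a ≤ b)
    (h : ∀ᶠ η in 𝓝[>] (0 : ℝ), ∃ δ > 0, ∀ x y, a ≤ x → x ≤ y → y ≤ b → y - x ≤ δ →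
      ‖g y - g x‖ ≤ η * (φ y - φ x)) :
    g b = g a := by
  have hle : ∀ᶠ η in 𝓝[>] (0 : ℝ), ‖g b - g a‖ ≤ η * (φ b - φ a) :=
    h.mono fun η ⟨δ, hδ, hη⟩ => by
      simpa only [mul_sub] using
        norm_sub_le_of_forall_near (φ := fun y => η * φ y) hδ hab (by simpa only [mul_sub] using hη)
  have hlim : Tendsto (fun η : ℝ => η * (φ b - φ a)) (𝓝[>] 0) (𝓝 0) := by
    simpa using ((continuous_id.mul_const (φ b - φ a)).tendsto 0).mono_left nhdsWithin_le_nhds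
  rw [← sub_eq_zero, ← norm_le_zero_iff]
  exact ge_of_tendsto hlim hle

theorem eVariationOn_le_of_norm_sub_le {s : Set ℝ}
    (h : ∀ x ∈ s, ∀ y ∈ s, x ≤ y → ‖g y - g x‖ ≤ φ y - φ x) :
    eVariationOn g s ≤ eVariationOn φ s := by
  refine iSup_le fun ⟨n, u, hu, us⟩ => (Finset.sum_le_sum fun i _ => ?_).trans
    (eVariationOn.sum_le hu us)
  rw [edist_dist, edist_dist, dist_eq_norm, Real.dist_eq]
  exact ENNReal.ofReal_le_ofReal
    ((h _ (us i) _ (us (i + 1)) (hu i.le_succ)).trans (le_abs_self _))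

theorem boundedVariationOn_Icc_of_norm_sub_le (hab : a ≤ b)
    (h : ∀ x ∈ Icc a b, ∀ y ∈ Icc a b, x ≤ y → ‖g y - g x‖ ≤ φ y - φ x) :
    BoundedVariationOn g (Icc a b) := by
  have hφ : MonotoneOn φ (Icc a b) := fun x hx y hy hxy =>
    sub_nonneg.mp ((norm_nonneg _).trans (h x hx y hy hxy))
  refine ne_top_of_le_ne_top ?_ (eVariationOn_le_of_norm_sub_le h)
  rw [← inter_self (Icc a b), hφ.eVariationOn_eq ⟨le_rfl, hab⟩ ⟨hab, le_rfl⟩]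
  exact ENNReal.ofReal_ne_top

end IncrementBounds

theorem variationOnFromTo_sub_eq {E : Type*} [PseudoEMetricSpace E] {f : ℝ → E} {a b x y : ℝ}
    (hf : BoundedVariationOn f (Icc a b)) (hax : a ≤ x) (hxy : x ≤ y) (hyb : y ≤ b) :
    variationOnFromTo f (Icc a b) a y - variationOnFromTo f (Icc a b) a x
      = (eVariationOn f (Icc x y)).toReal := by
  have hab := hax.trans (hxy.trans hyb)
  rw [variationOnFromTo.sub_right hf.locallyBoundedVariationOn ⟨le_rfl, hab⟩
      ⟨hax.trans hxy, hyb⟩ ⟨hax, hxy.trans hyb⟩, variationOnFromTo.eq_of_le _ _ hxy,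
    inter_eq_right.mpr (Icc_subset_Icc hax hyb)]

theorem norm_sub_mul_exp_le {u v d : ℂ} {η W : ℝ} (hη : η ≤ 1) (hd : ‖d‖ ≤ η)
    (hR : ‖v * d - (v - u)‖ ≤ η * W) (hW : ‖v - u‖ ≤ W) :
    ‖v - u * Complex.exp d‖ ≤ 5 * η * W := by
  have hη0 : 0 ≤ η := (norm_nonneg _).trans hd
  have hW0 : 0 ≤ W := (norm_nonneg _).trans hW
  have hvud : ‖(v - u) * d‖ ≤ W * η := by
    rw [norm_mul]; exact mul_le_mul hW hd (norm_nonneg _) hW0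
  have hud : ‖u * d‖ ≤ 3 * W :=
    calc ‖u * d‖ = ‖(v * d - (v - u)) + (v - u) - (v - u) * d‖ := by ring_nf
      _ ≤ ‖v * d - (v - u)‖ + ‖v - u‖ + ‖(v - u) * d‖ :=
          (norm_sub_le _ _).trans (add_le_add_left (norm_add_le _ _) _)
      _ ≤ 3 * W := by nlinarith
  have hquad : ‖u * (Complex.exp d - 1 - d)‖ ≤ η * (3 * W) :=
    calc ‖u * (Complex.exp d - 1 - d)‖ ≤ ‖u‖ * ‖d‖ ^ 2 := by
          rw [norm_mul]
          exact mul_le_mul_of_nonneg_left (Complex.norm_exp_sub_one_sub_id_le (hd.trans hη))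
            (norm_nonneg _)
      _ = ‖d‖ * ‖u * d‖ := by rw [norm_mul]; ring
      _ ≤ η * (3 * W) := mul_le_mul hd hud (norm_nonneg _) hη0
  calc ‖v - u * Complex.exp d‖
      = ‖-(v * d - (v - u)) + (v - u) * d - u * (Complex.exp d - 1 - d)‖ := by ring_nf
    _ ≤ ‖v * d - (v - u)‖ + ‖(v - u) * d‖ + ‖u * (Complex.exp d - 1 - d)‖ := by
        refine (norm_sub_le _ _).trans (add_le_add_left ((norm_add_le _ _).trans ?_) _)
        rw [norm_neg]
    _ ≤ 5 * η * W := by nlinarith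

section RSEquation

variable {S V : ℝ → ℂ} {a b : ℝ}

theorem norm_mul_sub_sub_le_of_isRSIntegral
    (h : ∀ t ∈ Icc a b, IsRSIntegral S V a t (S t - S a))
    (hS : BoundedVariationOn S (Icc a b)) {x y C : ℝ} (hax : a ≤ x) (hxy : x ≤ y) (hyb : y ≤ b)
    (hV : ∀ u ∈ Icc x y, ‖V u - V x‖ ≤ C) :
    ‖S y * (V y - V x) - (S y - S x)‖ ≤ C * (eVariationOn S (Icc x y)).toReal := by
  have hxy' := (h x ⟨hax, hxy.trans hyb⟩).sub (h y ⟨hax.trans hxy, hyb⟩) hax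
  rw [sub_sub_sub_cancel_right] at hxy'
  exact hxy'.norm_mul_sub_le hxy (hS.mono (Icc_subset_Icc hax hyb)) hV

theorem eq_mul_exp_of_isRSIntegral (hab : a ≤ b) (hS : BoundedVariationOn S (Icc a b))
    (hV : ContinuousOn V (Icc a b)) (h : ∀ t ∈ Icc a b, IsRSIntegral S V a t (S t - S a)) :
    S b = S a * Complex.exp (V b - V a) := by
  obtain ⟨K, hK⟩ := isCompact_Icc.exists_bound_of_continuousOn hV
  have hVuc := Metric.uniformContinuousOn_iff_le.mp
    (isCompact_Icc.uniformContinuousOn_of_continuous hV)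
  have hconst : S b * Complex.exp (-V b) = S a * Complex.exp (-V a) := by
    refine eq_of_eventually_norm_sub_le (g := fun u => S u * Complex.exp (-V u))
      (φ := fun y => 5 * Real.exp K * variationOnFromTo S (Icc a b) a y) hab ?_
    filter_upwards [Ioo_mem_nhdsGT one_pos] with η ⟨hη0, hη1⟩
    obtain ⟨δ, hδ, hδV⟩ := hVuc η hη0
    refine ⟨δ, hδ, fun x y hax hxy hyb hyx => ?_⟩
    have hosc : ∀ u ∈ Icc x y, ‖V u - V x‖ ≤ η := fun u hu => by
      rw [← dist_eq_norm]
      refine hδV u ⟨hax.trans hu.1, hu.2.trans hyb⟩ x ⟨hax, hxy.trans hyb⟩ ?_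
      rw [Real.dist_eq, abs_of_nonneg (sub_nonneg.mpr hu.1)]
      linarith [hu.2]
    have hΔS : ‖S y - S x‖ ≤ (eVariationOn S (Icc x y)).toReal := by
      simpa only [dist_eq_norm] using
        (hS.mono (Icc_subset_Icc hax hyb)).dist_le ⟨hxy, le_rfl⟩ ⟨le_rfl, hxy⟩
    have hinc := norm_sub_mul_exp_le hη1.le (hosc y ⟨hxy, le_rfl⟩)
      (norm_mul_sub_sub_le_of_isRSIntegral h hS hax hxy hyb hosc) hΔS
    calc ‖S y * Complex.exp (-V y) - S x * Complex.exp (-V x)‖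
        = ‖Complex.exp (-V y)‖ * ‖S y - S x * Complex.exp (V y - V x)‖ := by
          rw [← norm_mul, Complex.exp_sub, Complex.exp_neg, Complex.exp_neg]
          field_simp
      _ ≤ Real.exp K * (5 * η * (eVariationOn S (Icc x y)).toReal) := by
          refine mul_le_mul ((Complex.norm_exp_le_exp_norm _).trans ?_) hinc (norm_nonneg _)
            (Real.exp_pos K).le
          rw [norm_neg, Real.exp_le_exp]
          exact hK y ⟨hax.trans hxy, hyb⟩
      _ = η * (5 * Real.exp K * variationOnFromTo S (Icc a b) a y
            - 5 * Real.exp K * variationOnFromTo S (Icc a b) a x) := by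
          rw [← mul_sub, variationOnFromTo_sub_eq hS hax hxy hyb]
          ring
  calc S b = S b * Complex.exp (-V b) * Complex.exp (V b) := by
        rw [mul_assoc, ← Complex.exp_add, neg_add_cancel, Complex.exp_zero, mul_one]
    _ = S a * Complex.exp (V b - V a) := by
        rw [hconst, mul_assoc, ← Complex.exp_add, neg_add_eq_sub]

theorem boundedVariationOn_of_isRSIntegral (hab : a ≤ b) (hScont : ContinuousOn S (Icc a b))
    (hS : BoundedVariationOn S (Icc a b)) (hV : ContinuousOn V (Icc a b))
    (hS0 : ∀ u ∈ Icc a b, S u ≠ 0) (h : ∀ t ∈ Icc a b, IsRSIntegral S V a t (S t - S a)) :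
    BoundedVariationOn V (Icc a b) := by
  obtain ⟨z, hz, hmin⟩ := isCompact_Icc.exists_isMinOn (nonempty_Icc.mpr hab) hScont.norm
  obtain ⟨K, hK⟩ := isCompact_Icc.exists_bound_of_continuousOn hV
  have hm : 0 < ‖S z‖ := norm_pos_iff.mpr (hS0 z hz)
  refine boundedVariationOn_Icc_of_norm_sub_le
    (φ := fun y => (2 * K + 1) / ‖S z‖ * variationOnFromTo S (Icc a b) a y) hab
    fun x hx y hy hxy => ?_
  have hosc : ∀ u ∈ Icc x y, ‖V u - V x‖ ≤ 2 * K := fun u hu =>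
    (norm_sub_le _ _).trans (by linarith [hK u ⟨hx.1.trans hu.1, hu.2.trans hy.2⟩, hK x hx])
  have hΔS : ‖S y - S x‖ ≤ (eVariationOn S (Icc x y)).toReal := by
    simpa only [dist_eq_norm] using
      (hS.mono (Icc_subset_Icc hx.1 hy.2)).dist_le ⟨hxy, le_rfl⟩ ⟨le_rfl, hxy⟩
  have hR := norm_mul_sub_sub_le_of_isRSIntegral h hS hx.1 hxy hy.2 hosc
  rw [← mul_sub, variationOnFromTo_sub_eq hS hx.1 hxy hy.2, div_mul_eq_mul_div,
    le_div_iff₀ hm]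
  calc ‖V y - V x‖ * ‖S z‖ ≤ ‖S y * (V y - V x)‖ := by
        rw [norm_mul, mul_comm]
        exact mul_le_mul_of_nonneg_right (hmin hy) (norm_nonneg _)
    _ ≤ ‖S y - S x‖ + ‖S y * (V y - V x) - (S y - S x)‖ := norm_le_insert' _ _
    _ ≤ (2 * K + 1) * (eVariationOn S (Icc x y)).toReal := by linarith

end RSEquation

/-- If `S : [0,T] → ℂ` is continuous of bounded variation, `V : [0,T] → ℂ` is continuous,
`S 0 ≠ 0` and `S t = S 0 + ∫₀ᵗ S dV` on `[0,T]`, then `V` has bounded variation and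
`S t = S 0 · exp (V t − V 0)` on `[0,T]`. -/
theorem stmt1 (T : ℝ) (hT : 0 < T) (S V : ℝ → ℂ)
    (hScont : ContinuousOn S (Icc 0 T))
    (hSBV : BoundedVariationOn S (Icc 0 T))
    (hVcont : ContinuousOn V (Icc 0 T))
    (hS0 : S 0 ≠ 0)
    (heq : ∀ t ∈ Icc (0:ℝ) T, IsRSIntegral S V 0 t (S t - S 0)) :
    BoundedVariationOn V (Icc 0 T) ∧
      ∀ t ∈ Icc (0:ℝ) T, S t = S 0 * Complex.exp (V t - V 0) := by
  have hexp : ∀ t ∈ Icc (0:ℝ) T, S t = S 0 * Complex.exp (V t - V 0) := fun t ht =>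
    eq_mul_exp_of_isRSIntegral ht.1 (hSBV.mono (Icc_subset_Icc le_rfl ht.2))
      (hVcont.mono (Icc_subset_Icc le_rfl ht.2)) fun s hs => heq s ⟨hs.1, hs.2.trans ht.2⟩
  refine ⟨boundedVariationOn_of_isRSIntegral hT.le hScont hSBV hVcont (fun u hu => ?_) heq, hexp⟩
  rw [hexp u hu]
  exact mul_ne_zero hS0 (Complex.exp_ne_zero _)
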